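/- For all k, ℓ ∈ ℤ² ∖ {(0,0)}, with a = (k₂ℓ₁ − k₁ℓ₂)/(|k||ℓ|), one has 𝒥^{1,1}_{k,ℓ}(x) − 𝒥^{0,0}_{ℓ,k}(x) = a·sin((k+ℓ)·x)·(ℓ₂ − k₂, k₁ − ℓ₁) for all x ∈ ℝ²; moreover, if k + ℓ ≠ (0,0) then ⟨𝒥^{1,1}_{k,ℓ} − 𝒥^{0,0}_{ℓ,k}, e^1_{k+ℓ}⟩_{L²} = 2π²·a·(|k|² − |ℓ|²)/|k+ℓ|. -/
import Mathlib


/-- Euclidean norm of an integer vector. -/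
noncomputable def znorm (k : ℤ × ℤ) : ℝ := Real.sqrt ((k.1 : ℝ) ^ 2 + (k.2 : ℝ) ^ 2)

/-- The pairing `k · x = k₁x₁ + k₂x₂`. -/
noncomputable def kdot (k : ℤ × ℤ) (x : ℝ × ℝ) : ℝ := (k.1 : ℝ) * x.1 + (k.2 : ℝ) * x.2

/-- The vector field `e_k^0(x) = (k₂/|k|, −k₁/|k|)·cos(k·x)`. -/
noncomputable def e0 (k : ℤ × ℤ) : ℝ × ℝ → ℝ × ℝ := fun x =>
  (((k.2 : ℝ) / znorm k) * Real.cos (kdot k x), (-(k.1 : ℝ) / znorm k) * Real.cos (kdot k x))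

/-- The vector field `e_k^1(x) = (−k₂/|k|, k₁/|k|)·sin(k·x)`. -/
noncomputable def e1 (k : ℤ × ℤ) : ℝ × ℝ → ℝ × ℝ := fun x =>
  ((-(k.2 : ℝ) / znorm k) * Real.sin (kdot k x), ((k.1 : ℝ) / znorm k) * Real.sin (kdot k x))

/-- The advection `b(u,v) = (u·∇)v`, i.e. the derivative of `v` in the direction `u`. -/
noncomputable def adv (u v : ℝ × ℝ → ℝ × ℝ) : ℝ × ℝ → ℝ × ℝ := fun x => fderiv ℝ v x (u x)

/-- The `L²` pairing `⟨f,g⟩ = ∫_{[−π,π]²} f(x)·g(x) dx`. -/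
noncomputable def pairL2 (f g : ℝ × ℝ → ℝ × ℝ) : ℝ :=
  ∫ x in Set.Icc ((-Real.pi, -Real.pi) : ℝ × ℝ) ((Real.pi, Real.pi) : ℝ × ℝ),
    ((f x).1 * (g x).1 + (f x).2 * (g x).2)

/-- `𝒥^{0,1}_{k,ℓ} = b(e_k^0, e_ℓ^1) + b(e_ℓ^1, e_k^0)`. -/
noncomputable def J01 (k l : ℤ × ℤ) : ℝ × ℝ → ℝ × ℝ := fun x =>
  adv (e0 k) (e1 l) x + adv (e1 l) (e0 k) x

/-- `𝒥^{0,0}_{k,ℓ} = b(e_k^0, e_ℓ^0) + b(e_ℓ^0, e_k^0)`. -/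
noncomputable def J00 (k l : ℤ × ℤ) : ℝ × ℝ → ℝ × ℝ := fun x =>
  adv (e0 k) (e0 l) x + adv (e0 l) (e0 k) x

/-- `𝒥^{1,1}_{k,ℓ} = b(e_k^1, e_ℓ^1) + b(e_ℓ^1, e_k^1)`. -/
noncomputable def J11 (k l : ℤ × ℤ) : ℝ × ℝ → ℝ × ℝ := fun x =>
  adv (e1 k) (e1 l) x + adv (e1 l) (e1 k) x

/-- `𝒵^{0,1}_{k,ℓ} = b(e_k^0, e_ℓ^1) − b(e_ℓ^1, e_k^0)`. -/
noncomputable def Z01 (k l : ℤ × ℤ) : ℝ × ℝ → ℝ × ℝ := fun x =>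
  adv (e0 k) (e1 l) x - adv (e1 l) (e0 k) x

/-- `𝒵^{0,0}_{k,ℓ} = b(e_k^0, e_ℓ^0) − b(e_ℓ^0, e_k^0)`. -/
noncomputable def Z00 (k l : ℤ × ℤ) : ℝ × ℝ → ℝ × ℝ := fun x =>
  adv (e0 k) (e0 l) x - adv (e0 l) (e0 k) x

/-- `𝒵^{1,1}_{k,ℓ} = b(e_k^1, e_ℓ^1) − b(e_ℓ^1, e_k^1)`. -/
noncomputable def Z11 (k l : ℤ × ℤ) : ℝ × ℝ → ℝ × ℝ := fun x =>
  adv (e1 k) (e1 l) x - adv (e1 l) (e1 k) x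


open MeasureTheory Real

noncomputable def cl (k : ℤ × ℤ) : ℝ × ℝ →L[ℝ] ℝ :=
  (k.1 : ℝ) • (ContinuousLinearMap.fst ℝ ℝ ℝ) + (k.2 : ℝ) • (ContinuousLinearMap.snd ℝ ℝ ℝ)

lemma kdot_eq_cl (k : ℤ × ℤ) : kdot k = ⇑(cl k) := by funext y; simp [kdot, cl]

lemma kdot_mk (k : ℤ × ℤ) (p q : ℝ) : kdot k (p, q) = (k.1:ℝ) * p + (k.2:ℝ) * q := rfl

lemma hasFDerivAt_kdot (k : ℤ × ℤ) (x : ℝ × ℝ) : HasFDerivAt (kdot k) (cl k) x := by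
  rw [kdot_eq_cl]; exact (cl k).hasFDerivAt

lemma znorm_pos (k : ℤ × ℤ) (hk : k ≠ (0,0)) : 0 < znorm k := by
  have h2 : k.1 ≠ 0 ∨ k.2 ≠ 0 := by
    by_contra hc; push_neg at hc; exact hk (Prod.ext hc.1 hc.2)
  have h : (k.1 : ℝ) ^ 2 + (k.2 : ℝ) ^ 2 > 0 := by
    rcases h2 with h1 | h1 <;>
      [(have h3 : (k.1:ℝ) ≠ 0 := Int.cast_ne_zero.mpr h1);
       (have h3 : (k.2:ℝ) ≠ 0 := Int.cast_ne_zero.mpr h1)] <;>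
      nlinarith [sq_nonneg (k.1:ℝ), sq_nonneg (k.2:ℝ), abs_pos.mpr h3,
        sq_abs (k.1:ℝ), sq_abs (k.2:ℝ)]
  exact Real.sqrt_pos.mpr h

lemma znorm_sq (k : ℤ × ℤ) : znorm k ^ 2 = (k.1:ℝ)^2 + (k.2:ℝ)^2 := Real.sq_sqrt (by positivity)

lemma hasFDerivAt_e1 (k : ℤ × ℤ) (x : ℝ × ℝ) :
    HasFDerivAt (e1 k)
      (((-(k.2:ℝ)/znorm k) • (Real.cos (kdot k x) • cl k)).prod
       (((k.1:ℝ)/znorm k) • (Real.cos (kdot k x) • cl k))) x :=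
  HasFDerivAt.prodMk (((hasFDerivAt_kdot k x).sin).const_mul _)
    (((hasFDerivAt_kdot k x).sin).const_mul _)

lemma hasFDerivAt_e0 (k : ℤ × ℤ) (x : ℝ × ℝ) :
    HasFDerivAt (e0 k)
      ((((k.2:ℝ)/znorm k) • ((-Real.sin (kdot k x)) • cl k)).prod
       ((-(k.1:ℝ)/znorm k) • ((-Real.sin (kdot k x)) • cl k))) x :=
  HasFDerivAt.prodMk (((hasFDerivAt_kdot k x).cos).const_mul _)
    (((hasFDerivAt_kdot k x).cos).const_mul _)

lemma fderiv_e1_apply (k : ℤ × ℤ) (x v : ℝ × ℝ) :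
    fderiv ℝ (e1 k) x v =
      ((-(k.2:ℝ)/znorm k) * (Real.cos (kdot k x) * kdot k v),
       ((k.1:ℝ)/znorm k) * (Real.cos (kdot k x) * kdot k v)) := by
  rw [(hasFDerivAt_e1 k x).fderiv]; simp [kdot_eq_cl]

lemma fderiv_e0_apply (k : ℤ × ℤ) (x v : ℝ × ℝ) :
    fderiv ℝ (e0 k) x v =
      (((k.2:ℝ)/znorm k) * (-Real.sin (kdot k x) * kdot k v),
       (-(k.1:ℝ)/znorm k) * (-Real.sin (kdot k x) * kdot k v)) := by
  rw [(hasFDerivAt_e0 k x).fderiv]; simp [kdot_eq_cl]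

lemma kdot_add' (k l : ℤ × ℤ) (x : ℝ × ℝ) : kdot (k + l) x = kdot k x + kdot l x := by
  simp [kdot]; ring

lemma part1 (k l : ℤ × ℤ) (hk : k ≠ (0, 0)) (hl : l ≠ (0, 0))
    (a : ℝ) (ha : a = ((k.2 : ℝ) * (l.1 : ℝ) - (k.1 : ℝ) * (l.2 : ℝ)) / (znorm k * znorm l))
    (x : ℝ × ℝ) :
    J11 k l x - J00 l k x =
        (a * Real.sin (kdot (k + l) x) * ((l.2 : ℝ) - (k.2 : ℝ)),
         a * Real.sin (kdot (k + l) x) * ((k.1 : ℝ) - (l.1 : ℝ))) := by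
  have hnk := (znorm_pos k hk).ne'
  have hnl := (znorm_pos l hl).ne'
  have hKL : Real.sin (kdot (k + l) x) =
      Real.sin (kdot k x) * Real.cos (kdot l x) + Real.cos (kdot k x) * Real.sin (kdot l x) := by
    rw [kdot_add', Real.sin_add]
  simp only [J11, J00, adv, fderiv_e1_apply, fderiv_e0_apply, e0, e1, kdot_mk,
    Prod.mk_add_mk, Prod.mk_sub_mk, hKL, ha, Prod.mk.injEq]
  constructor <;> (field_simp; ring)

lemma sin_two_int_pi (c : ℤ) : Real.sin (2*(c:ℝ)*π) = 0 := by
  have := Real.sin_int_mul_pi (2*c)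
  push_cast at this
  linarith [this]

lemma cos_two_int_pi (c : ℤ) : Real.cos (2*(c:ℝ)*π) = 1 := by
  have := Real.cos_int_mul_two_pi c
  convert this using 2
  ring

lemma integral_cos_shift (c : ℤ) (hc : c ≠ 0) (d : ℝ) :
    ∫ y in (-π)..π, Real.cos (2*(c:ℝ)*y + d) = 0 := by
  have hc' : (2*(c:ℝ)) ≠ 0 := by
    simp [Int.cast_ne_zero.mpr hc]
  rw [intervalIntegral.integral_comp_mul_add Real.cos hc' d, integral_cos]
  have h1 : Real.sin (2*(c:ℝ)*π + d) = Real.sin d := by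
    rw [Real.sin_add, sin_two_int_pi, cos_two_int_pi]; ring
  have h2 : Real.sin (2*(c:ℝ)*(-π) + d) = Real.sin d := by
    have e : 2*(c:ℝ)*(-π) + d = 2*(-c:ℤ)*π + d := by push_cast; ring
    rw [e, Real.sin_add, sin_two_int_pi, cos_two_int_pi]; ring
  rw [h1, h2]
  simp

lemma integral_sin_sq_line (c : ℤ) (hc : c ≠ 0) (d : ℝ) :
    ∫ y in (-π)..π, Real.sin ((c:ℝ)*y + d)^2 = π := by
  have h : ∀ y : ℝ, Real.sin ((c:ℝ)*y + d)^2 = 1/2 - Real.cos (2*(c:ℝ)*y + 2*d)/2 := by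
    intro y
    rw [Real.sin_sq_eq_half_sub]
    ring_nf
  simp_rw [h]
  have hcont : Continuous fun y : ℝ => Real.cos (2*(c:ℝ)*y + 2*d) / 2 := by continuity
  rw [intervalIntegral.integral_sub (intervalIntegrable_const) (hcont.intervalIntegrable _ _)]
  rw [intervalIntegral.integral_div, intervalIntegral.integral_div,
    integral_cos_shift c hc (2*d)]
  simp

lemma Icc_to_interval (g : ℝ → ℝ) :
    ∫ y in Set.Icc (-π) π, g y = ∫ y in (-π)..π, g y := by
  rw [intervalIntegral.integral_of_le (by linarith [pi_pos]), integral_Icc_eq_integral_Ioc]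

lemma sinsq_box (m : ℤ × ℤ) (hm : m ≠ (0,0)) :
    ∫ x in Set.Icc ((-π, -π) : ℝ × ℝ) ((π, π) : ℝ × ℝ), Real.sin (kdot m x)^2 = 2*π^2 := by
  have hcd : Continuous (kdot m) := by rw [kdot_eq_cl]; exact (cl m).continuous
  have hcont : Continuous fun x : ℝ × ℝ => Real.sin (kdot m x)^2 :=
    (Real.continuous_sin.comp hcd).pow 2
  have hIcc : Set.Icc ((-π, -π) : ℝ × ℝ) ((π, π) : ℝ × ℝ)
      = Set.Icc (-π) π ×ˢ Set.Icc (-π) π := Set.Icc_prod_eq _ _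
  have hint : IntegrableOn (fun x : ℝ × ℝ => Real.sin (kdot m x)^2)
      (Set.Icc (-π) π ×ˢ Set.Icc (-π) π) volume := by
    rw [← hIcc]; exact hcont.integrableOn_Icc
  rw [hIcc, Measure.volume_eq_prod]
  rw [MeasureTheory.setIntegral_prod _ hint]
  simp_rw [kdot_mk]
  rw [Icc_to_interval]
  simp_rw [Icc_to_interval]
  by_cases hm2 : m.2 = 0
  · have hm1 : m.1 ≠ 0 := by
      intro h1; exact hm (Prod.ext h1 hm2)
    simp_rw [hm2, Int.cast_zero, zero_mul, add_zero, intervalIntegral.integral_const,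
      smul_eq_mul]
    rw [intervalIntegral.integral_const_mul]
    have h1 := integral_sin_sq_line m.1 hm1 0
    simp_rw [add_zero] at h1
    rw [h1]; ring
  · have h : ∀ x : ℝ, (∫ y in (-π)..π, Real.sin ((m.1:ℝ)*x + (m.2:ℝ)*y)^2) = π := by
      intro x
      simp_rw [show ∀ y : ℝ, (m.1:ℝ)*x + (m.2:ℝ)*y = (m.2:ℝ)*y + (m.1:ℝ)*x from
        fun y => by ring]
      exact integral_sin_sq_line m.2 hm2 _
    simp_rw [h]
    rw [intervalIntegral.integral_const]
    simp
    ring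

theorem J11_J00_diff_identity_and_pairing (k l : ℤ × ℤ) (hk : k ≠ (0, 0)) (hl : l ≠ (0, 0))
    (a : ℝ) (ha : a = ((k.2 : ℝ) * (l.1 : ℝ) - (k.1 : ℝ) * (l.2 : ℝ)) / (znorm k * znorm l)) :
    (∀ x : ℝ × ℝ,
      J11 k l x - J00 l k x =
        (a * Real.sin (kdot (k + l) x) * ((l.2 : ℝ) - (k.2 : ℝ)),
         a * Real.sin (kdot (k + l) x) * ((k.1 : ℝ) - (l.1 : ℝ)))) ∧
    (k + l ≠ (0, 0) →
      pairL2 (fun x => J11 k l x - J00 l k x) (e1 (k + l)) =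
        2 * Real.pi ^ 2 * a * ((znorm k) ^ 2 - (znorm l) ^ 2) / znorm (k + l)) := by
  have h1 := part1 k l hk hl a ha
  refine ⟨h1, ?_⟩
  intro hkl
  set m := k + l with hm
  have hn := (znorm_pos m hkl).ne'
  have hcoef : ((l.2:ℝ) - k.2) * (-((m.2:ℝ))) + ((k.1:ℝ) - l.1) * (m.1:ℝ)
      = znorm k ^ 2 - znorm l ^ 2 := by
    have e1' : ((m.1:ℤ):ℝ) = (k.1:ℝ) + (l.1:ℝ) := by rw [hm, Prod.fst_add]; push_cast; ring
    have e2' : ((m.2:ℤ):ℝ) = (k.2:ℝ) + (l.2:ℝ) := by rw [hm, Prod.snd_add]; push_cast; ring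
    rw [znorm_sq, znorm_sq, e1', e2']; ring
  have hpt : ∀ x : ℝ × ℝ,
      ((J11 k l x - J00 l k x).1 * (e1 m x).1 + (J11 k l x - J00 l k x).2 * (e1 m x).2)
      = (a * (znorm k ^ 2 - znorm l ^ 2) / znorm m) * Real.sin (kdot m x) ^ 2 := by
    intro x
    rw [h1 x]
    simp only [e1]
    rw [← hcoef]
    ring
  unfold pairL2
  simp_rw [hpt]
  rw [MeasureTheory.integral_const_mul, sinsq_box m hkl]
  ring
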